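/- arXiv:1310.5053 — 5 statements merged into one kernel-verified Lean document; each statement's English description precedes it below -/
import Mathlib

section
/- Let $V$ be a Hilbert space, $\beta \in (0, 1/2)$, $T>0$, $h \in L^1(0,T)$ and $f$ with $\int_0^T t^{-2\beta}\|f(t)\|_V^2\,dt < \infty$. Then $\int_0^T t^{-2\beta} \|(h*f)(t)\|_V^2\,dt \le \|h\|_{L^1(0,T)}^2 \int_0^T t^{-2\beta}\|f(t)\|_V^2\,dt$, where $(h*f)(t) = \int_0^t h(t-s)f(s)\,ds$. -/
open MeasureTheory Set
open scoped ENNReal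

/-!
With `H = ‖h‖`, `F = ‖f‖` and the decreasing weight `w t = t^{-2β}`: for fixed `t`,
Cauchy–Schwarz for the measure `H (t - s) ds` on `(0, t)` gives
`(∫ H (t - s) F s ds)² ≤ ‖H‖₁ ∫ H (t - s) F s² ds`, and `w t ≤ w s` for `s < t` moves the
weight inside the integral. Integrating in `t` and exchanging the order of integration, the
remaining convolution of `H` with `w F²` has mass `‖H‖₁ ∫ w F²`.
-/

namespace ENNReal

theorem sq_lintegral_mul_le {α : Type*} [MeasurableSpace α] {μ : Measure α}
    {a b : α → ℝ≥0∞} (ha : AEMeasurable a μ) (hb : AEMeasurable b μ) :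
    (∫⁻ x, a x * b x ∂μ) ^ 2 ≤ (∫⁻ x, a x ∂μ) * ∫⁻ x, a x * b x ^ 2 ∂μ := by
  have sqrt_sq (x : ℝ≥0∞) : (x ^ (1 / 2 : ℝ)) ^ 2 = x := by
    rw [← rpow_natCast, ← rpow_mul]; norm_num
  have hab (x : α) : a x ^ (1 / 2 : ℝ) * (a x * b x ^ 2) ^ (1 / 2 : ℝ) = a x * b x := by
    rw [mul_rpow_of_nonneg _ _ (by norm_num), ← mul_assoc,
      ← rpow_add_of_nonneg _ _ (by norm_num) (by norm_num), ← rpow_natCast, ← rpow_mul]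
    norm_num
  have holder := lintegral_mul_norm_pow_le (g := fun x => a x * b x ^ 2) ha
    (ha.mul (hb.pow_const 2)) (p := 1 / 2) (q := 1 / 2) (by norm_num) (by norm_num)
    (by norm_num)
  simp only [hab] at holder
  calc (∫⁻ x, a x * b x ∂μ) ^ 2
      ≤ ((∫⁻ x, a x ∂μ) ^ (1 / 2 : ℝ) * (∫⁻ x, a x * b x ^ 2 ∂μ) ^ (1 / 2 : ℝ)) ^ 2 := by
        gcongr
    _ = (∫⁻ x, a x ∂μ) * ∫⁻ x, a x * b x ^ 2 ∂μ := by rw [mul_pow, sqrt_sq, sqrt_sq]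

end ENNReal

theorem AEMeasurable.exists_measurable_ge_ae_eq {α : Type*} [MeasurableSpace α]
    {μ : Measure α} {f : α → ℝ≥0∞} (hf : AEMeasurable f μ) :
    ∃ g, Measurable g ∧ f ≤ g ∧ g =ᵐ[μ] f := by
  set N := toMeasurable μ {x | f x ≠ hf.mk f x}
  have hN : μ N = 0 := by rw [measure_toMeasurable]; exact ae_iff.mp hf.ae_eq_mk
  refine ⟨hf.mk f + N.indicator ⊤,
    hf.measurable_mk.add (measurable_const.indicator (measurableSet_toMeasurable _ _)),
    fun x => ?_, ?_⟩
  · by_cases hx : x ∈ N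
    · simp [hx]
    · have : f x = hf.mk f x := not_not.mp fun h => hx (subset_toMeasurable _ _ h)
      simp [hx, this]
  · filter_upwards [measure_eq_zero_iff_ae_notMem.mp hN, hf.ae_eq_mk] with x hxN hx
    simp [hxN, hx]

theorem lintegral_lintegral_comp_sub_mul {G : Type*} [MeasurableSpace G] [AddGroup G]
    [MeasurableAdd G] [MeasurableSub₂ G] {μ : Measure G} [SFinite μ] [μ.IsAddRightInvariant]
    {f g : G → ℝ≥0∞} (hf : Measurable f) (hg : Measurable g) :
    ∫⁻ t, ∫⁻ s, f (t - s) * g s ∂μ ∂μ = (∫⁻ t, f t ∂μ) * ∫⁻ s, g s ∂μ := by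
  have hk : Measurable fun p : G × G => f (p.1 - p.2) * g p.2 :=
    (hf.comp measurable_sub).mul (hg.comp measurable_snd)
  calc ∫⁻ t, ∫⁻ s, f (t - s) * g s ∂μ ∂μ
      = ∫⁻ s, ∫⁻ t, f (t - s) * g s ∂μ ∂μ := lintegral_lintegral_swap hk.aemeasurable
    _ = ∫⁻ s, (∫⁻ t, f t ∂μ) * g s ∂μ := by
        refine lintegral_congr fun s => ?_
        have hfs : Measurable fun t => f (t - s) := hf.comp (measurable_sub_const s)
        rw [lintegral_mul_const (g s) hfs, lintegral_sub_right_eq_self]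
    _ = (∫⁻ t, f t ∂μ) * ∫⁻ s, g s ∂μ := lintegral_const_mul _ hg

section TruncatedConvolution

variable {w H F : ℝ → ℝ≥0∞} {T : ℝ}

theorem mul_sq_setLIntegral_Ioo_comp_sub_mul_le (hw : AntitoneOn w (Ioi 0))
    (hH : Measurable H) (hF : Measurable F) {t : ℝ} (ht : t ∈ Ioo 0 T) :
    w t * (∫⁻ s in Ioo 0 t, H (t - s) * F s) ^ 2 ≤
      (∫⁻ s in Ioo 0 T, H s) * ∫⁻ s,
        (Ioo 0 T).indicator H (t - s) * (Ioo 0 T).indicator (fun s => w s * F s ^ 2) s := by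
  have hsub : ∀ s ∈ Ioo 0 t, t - s ∈ Ioo 0 T ∧ s ∈ Ioo 0 T := fun s hs =>
    ⟨⟨by linarith [hs.2], by linarith [hs.1, ht.2]⟩, ⟨hs.1, hs.2.trans ht.2⟩⟩
  have hHt : Measurable fun s => H (t - s) := hH.comp (measurable_const.sub measurable_id)
  have hmass : ∫⁻ s in Ioo 0 t, H (t - s) ≤ ∫⁻ s in Ioo 0 T, H s :=
    calc ∫⁻ s in Ioo 0 t, H (t - s) = ∫⁻ s in Ioo 0 t, (Ioo 0 T).indicator H (t - s) :=
          setLIntegral_congr_fun measurableSet_Ioo fun s hs => by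
            rw [indicator_of_mem (hsub s hs).1]
      _ ≤ ∫⁻ s, (Ioo 0 T).indicator H (t - s) := setLIntegral_le_lintegral _ _
      _ = ∫⁻ s in Ioo 0 T, H s := by
          rw [lintegral_sub_left_eq_self, lintegral_indicator measurableSet_Ioo]
  have hweight : w t * ∫⁻ s in Ioo 0 t, H (t - s) * F s ^ 2 ≤
      ∫⁻ s, (Ioo 0 T).indicator H (t - s) * (Ioo 0 T).indicator (fun s => w s * F s ^ 2) s :=
    calc w t * ∫⁻ s in Ioo 0 t, H (t - s) * F s ^ 2
        = ∫⁻ s in Ioo 0 t, w t * (H (t - s) * F s ^ 2) :=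
          (lintegral_const_mul _ (hHt.mul (hF.pow_const 2))).symm
      _ ≤ ∫⁻ s in Ioo 0 t,
            (Ioo 0 T).indicator H (t - s) * (Ioo 0 T).indicator (fun s => w s * F s ^ 2) s := by
          refine setLIntegral_mono' measurableSet_Ioo fun s hs => ?_
          rw [indicator_of_mem (hsub s hs).1, indicator_of_mem (hsub s hs).2,
            mul_left_comm (w t)]
          gcongr
          exact hw hs.1 (hs.1.trans hs.2) hs.2.le
      _ ≤ _ := setLIntegral_le_lintegral _ _
  calc w t * (∫⁻ s in Ioo 0 t, H (t - s) * F s) ^ 2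
      ≤ w t * ((∫⁻ s in Ioo 0 t, H (t - s)) * ∫⁻ s in Ioo 0 t, H (t - s) * F s ^ 2) := by
        gcongr
        exact ENNReal.sq_lintegral_mul_le hHt.aemeasurable hF.aemeasurable
    _ ≤ w t * ((∫⁻ s in Ioo 0 T, H s) * ∫⁻ s in Ioo 0 t, H (t - s) * F s ^ 2) := by gcongr
    _ = (∫⁻ s in Ioo 0 T, H s) * (w t * ∫⁻ s in Ioo 0 t, H (t - s) * F s ^ 2) := by ring
    _ ≤ _ := by gcongr

theorem setLIntegral_Ioo_mul_sq_setLIntegral_Ioo_comp_sub_mul_le (hw : AntitoneOn w (Ioi 0))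
    (hwm : Measurable w) (hH : Measurable H) (hF : Measurable F) :
    ∫⁻ t in Ioo 0 T, w t * (∫⁻ s in Ioo 0 t, H (t - s) * F s) ^ 2 ≤
      (∫⁻ s in Ioo 0 T, H s) ^ 2 * ∫⁻ s in Ioo 0 T, w s * F s ^ 2 := by
  set L := ∫⁻ s in Ioo 0 T, H s
  set H' := (Ioo 0 T).indicator H
  set G' := (Ioo 0 T).indicator fun s => w s * F s ^ 2
  have hH' : Measurable H' := hH.indicator measurableSet_Ioo
  have hG' : Measurable G' := (hwm.mul (hF.pow_const 2)).indicator measurableSet_Ioo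
  have hconv : Measurable fun t => ∫⁻ s, H' (t - s) * G' s :=
    ((hH'.comp measurable_sub).mul (hG'.comp measurable_snd)).lintegral_prod_right'
  calc ∫⁻ t in Ioo 0 T, w t * (∫⁻ s in Ioo 0 t, H (t - s) * F s) ^ 2
      ≤ ∫⁻ t in Ioo 0 T, L * ∫⁻ s, H' (t - s) * G' s :=
        setLIntegral_mono' measurableSet_Ioo fun t ht =>
          mul_sq_setLIntegral_Ioo_comp_sub_mul_le hw hH hF ht
    _ ≤ ∫⁻ t, L * ∫⁻ s, H' (t - s) * G' s := setLIntegral_le_lintegral _ _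
    _ = L * (L * ∫⁻ s in Ioo 0 T, w s * F s ^ 2) := by
        rw [lintegral_const_mul _ hconv, lintegral_lintegral_comp_sub_mul hH' hG',
          lintegral_indicator measurableSet_Ioo, lintegral_indicator measurableSet_Ioo]
    _ = L ^ 2 * ∫⁻ s in Ioo 0 T, w s * F s ^ 2 := by ring

end TruncatedConvolution

theorem ENNReal.ofReal_mul_norm_sq {E : Type*} [NormedAddCommGroup E] (a : ℝ) (x : E) :
    ENNReal.ofReal (a * ‖x‖ ^ 2) = ENNReal.ofReal a * ‖x‖ₑ ^ 2 := by
  rw [ENNReal.ofReal_mul' (by positivity), ENNReal.ofReal_pow (norm_nonneg _), ofReal_norm]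

theorem antitoneOn_ofReal_rpow_neg {γ : ℝ} (hγ : 0 ≤ γ) :
    AntitoneOn (fun t : ℝ => ENNReal.ofReal (t ^ (-γ))) (Ioi 0) := fun _ hs _ _ hst =>
  ENNReal.ofReal_le_ofReal (Real.rpow_le_rpow_of_nonpos hs hst (neg_nonpos.mpr hγ))

theorem convolution_weighted_L2_bound_general {V : Type*} [NormedAddCommGroup V]
    [InnerProductSpace ℂ V]
    (β T : ℝ) (hβ0 : 0 < β)
    (h : ℝ → ℂ) (f : ℝ → V)
    (hh : IntegrableOn h (Ioo 0 T))
    (hfm : AEStronglyMeasurable f (volume.restrict (Ioo 0 T))) :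
    ∫⁻ t in Ioo (0:ℝ) T,
        ENNReal.ofReal (t ^ (-(2 * β)) * ‖∫ s in Ioo (0:ℝ) t, h (t - s) • f s‖ ^ 2)
      ≤ (ENNReal.ofReal (∫ s in Ioo (0:ℝ) T, ‖h s‖)) ^ 2 *
        ∫⁻ t in Ioo (0:ℝ) T, ENNReal.ofReal (t ^ (-(2 * β)) * ‖f t‖ ^ 2) := by
  -- Measurable majorants, equal a.e. on `(0, T)`, make the bound on the inner integrals hold
  -- for every `t`, with no null sets to transport along `s ↦ t - s`.
  obtain ⟨H, hHm, hhH, hHh⟩ := hh.aestronglyMeasurable.enorm.exists_measurable_ge_ae_eq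
  obtain ⟨F, hFm, hfF, hFf⟩ := hfm.enorm.exists_measurable_ge_ae_eq
  have hconv (t : ℝ) :
      ‖∫ s in Ioo 0 t, h (t - s) • f s‖ₑ ≤ ∫⁻ s in Ioo 0 t, H (t - s) * F s :=
    (enorm_integral_le_lintegral_enorm _).trans <| lintegral_mono fun s => by
      rw [enorm_smul]; exact mul_le_mul' (hhH _) (hfF _)
  have hF_sq : ∫⁻ t in Ioo 0 T, ENNReal.ofReal (t ^ (-(2 * β))) * F t ^ 2 =
      ∫⁻ t in Ioo 0 T, ENNReal.ofReal (t ^ (-(2 * β))) * ‖f t‖ₑ ^ 2 :=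
    lintegral_congr_ae (hFf.mono fun t ht => by simp only [ht])
  simp only [ENNReal.ofReal_mul_norm_sq]
  calc _ ≤ ∫⁻ t in Ioo 0 T,
          ENNReal.ofReal (t ^ (-(2 * β))) * (∫⁻ s in Ioo 0 t, H (t - s) * F s) ^ 2 :=
        lintegral_mono fun t => by gcongr; exact hconv t
    _ ≤ _ := setLIntegral_Ioo_mul_sq_setLIntegral_Ioo_comp_sub_mul_le
          (antitoneOn_ofReal_rpow_neg (by positivity)) (by fun_prop) hHm hFm
    _ = _ := by rw [hF_sq, lintegral_congr_ae hHh, ofReal_integral_norm_eq_lintegral_enorm hh]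

/-- Weighted `L²` bound for the truncated convolution, `0 < β < 1/2`:
`∫_0^T t^{-2β} ‖(h*f)(t)‖² dt ≤ ‖h‖²_{L¹(0,T)} ∫_0^T t^{-2β} ‖f(t)‖² dt`. -/
theorem convolution_weighted_L2_bound {V : Type*} [NormedAddCommGroup V]
    [InnerProductSpace ℂ V] [CompleteSpace V]
    (β T : ℝ) (hβ0 : 0 < β) (hβ : β < 1 / 2) (hT : 0 < T)
    (h : ℝ → ℂ) (f : ℝ → V)
    (hh : IntegrableOn h (Ioo 0 T))
    (hfm : AEStronglyMeasurable f (volume.restrict (Ioo 0 T)))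
    (hf : ∫⁻ t in Ioo (0:ℝ) T, ENNReal.ofReal (t ^ (-(2 * β)) * ‖f t‖ ^ 2) < ⊤) :
    ∫⁻ t in Ioo (0:ℝ) T,
        ENNReal.ofReal (t ^ (-(2 * β)) * ‖∫ s in Ioo (0:ℝ) t, h (t - s) • f s‖ ^ 2)
      ≤ (ENNReal.ofReal (∫ s in Ioo (0:ℝ) T, ‖h s‖)) ^ 2 *
        ∫⁻ t in Ioo (0:ℝ) T, ENNReal.ofReal (t ^ (-(2 * β)) * ‖f t‖ ^ 2) :=
  convolution_weighted_L2_bound_general β T hβ0 h f hh hfm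
end

section
/- Let $V$ be a Hilbert space, $\beta \in (0,1/2)$, $T>0$, $h \in L^1(0,T)$ and $f$ with finite Gagliardo seminorm and weighted norm. Then the double integral $\int_0^T \int_0^t \Big(\int_s^t |h(\tau)|\,\|f(t-\tau)\|_V^2\, d\tau\Big)(t-s)^{-1-2\beta}\,ds\,dt \le \frac{1}{2\beta}\,\|h\|_{L^1(0,T)} \int_0^T t^{-2\beta}\|f(t)\|_V^2\,dt$. -/
/-!
Fubini on the triangle `0 < s < τ < t` turns the `s`-integral into
`∫_{-∞}^τ (t - s)^(-1-2β) ds = (t - τ)^(-2β) / (2β)`; Fubini on `0 < τ < t < T` and the shift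
`t ↦ t - τ` then bound what is left by `‖h‖_{L¹(0,T)}` times the weighted integral of `‖f‖²`.
Since `h` and `f` are only a.e. measurable on `(0, T)`, one first passes to measurable
representatives, which changes none of the inner integrals `∫_s^t |h(τ)| ‖f(t - τ)‖² dτ`.
-/

open MeasureTheory Set
open scoped ENNReal

theorem lintegral_Ioo_lintegral_Ioo_swap {a c : ℝ} {K : ℝ → ℝ → ℝ≥0∞}
    (hK : Measurable (Function.uncurry K)) :
    ∫⁻ x in Ioo a c, ∫⁻ y in Ioo x c, K x y = ∫⁻ y in Ioo a c, ∫⁻ x in Ioo a y, K x y := by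
  set S : Set (ℝ × ℝ) := {p | a < p.1 ∧ p.1 < p.2 ∧ p.2 < c}
  have hS : MeasurableSet S :=
    (measurableSet_lt measurable_const measurable_fst).inter
      ((measurableSet_lt measurable_fst measurable_snd).inter
        (measurableSet_lt measurable_snd measurable_const))
  have hswap := lintegral_lintegral_swap (μ := volume) (ν := volume)
    (f := fun x y => S.indicator (Function.uncurry K) (x, y)) (hK.indicator hS).aemeasurable
  convert hswap using 1
  · rw [← lintegral_indicator measurableSet_Ioo]
    congr 1 with x
    by_cases hx : x ∈ Ioo a c
    · rw [indicator_of_mem hx, ← lintegral_indicator measurableSet_Ioo]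
      congr 1 with y
      simp only [indicator, S, mem_Ioo, mem_ofPred_eq, Function.uncurry_apply_pair]
      grind
    · have hS0 : ∀ y, S.indicator (Function.uncurry K) (x, y) = 0 := fun y =>
        indicator_of_notMem (fun h => hx ⟨h.1, h.2.1.trans h.2.2⟩) _
      simp [indicator_of_notMem hx, hS0]
  · rw [← lintegral_indicator measurableSet_Ioo]
    congr 1 with y
    by_cases hy : y ∈ Ioo a c
    · rw [indicator_of_mem hy, ← lintegral_indicator measurableSet_Ioo]
      congr 1 with x
      simp only [indicator, S, mem_Ioo, mem_ofPred_eq, Function.uncurry_apply_pair]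
      grind
    · have hS0 : ∀ x, S.indicator (Function.uncurry K) (x, y) = 0 := fun x =>
        indicator_of_notMem (fun h => hy ⟨h.1.trans h.2.1, h.2.2⟩) _
      simp [indicator_of_notMem hy, hS0]

theorem setLIntegral_Iio_rpow_const_sub {r t τ : ℝ} (hr : 0 < r) (hτt : τ < t) :
    ∫⁻ s in Iio τ, ENNReal.ofReal ((t - s) ^ (-(1 + r))) =
      ENNReal.ofReal ((t - τ) ^ (-r) / r) := by
  have hc : 0 < t - τ := sub_pos.2 hτt
  have hpre : Iio τ = (t - ·) ⁻¹' Ioi (t - τ) := by rw [preimage_const_sub_Ioi, sub_sub_cancel]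
  have hnn : 0 ≤ᵐ[volume.restrict (Ioi (t - τ))] fun u => u ^ (-(1 + r)) :=
    (ae_restrict_iff' measurableSet_Ioi).2
      (.of_forall fun u hu => Real.rpow_nonneg (hc.trans hu).le _)
  rw [hpre, (Measure.measurePreserving_sub_left volume t).setLIntegral_comp_preimage_emb
      (measurableEmbedding_subLeft t) (fun u => ENNReal.ofReal (u ^ (-(1 + r)))),
    ← ofReal_integral_eq_lintegral_ofReal (integrableOn_Ioi_rpow_of_lt (by linarith) hc) hnn,
    integral_Ioi_rpow_of_lt (by linarith) hc, show -(1 + r) + 1 = -r by ring, neg_div_neg_eq]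

theorem setLIntegral_Ioo_comp_sub_const (g : ℝ → ℝ≥0∞) (a b c : ℝ) :
    ∫⁻ x in Ioo (a + c) (b + c), g (x - c) = ∫⁻ x in Ioo a b, g x := by
  rw [← preimage_sub_const_Ioo]
  exact (measurePreserving_sub_right volume c).setLIntegral_comp_preimage_emb
    (measurableEmbedding_subRight c) g _

theorem setLIntegral_Ioo_mul_rpow_const_sub_le {r a t : ℝ} (hr : 0 < r) {G : ℝ → ℝ≥0∞}
    (hG : Measurable G) :
    ∫⁻ s in Ioo a t, (∫⁻ τ in Ioo s t, G τ) * ENNReal.ofReal ((t - s) ^ (-(1 + r)))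
      ≤ ENNReal.ofReal (1 / r) * ∫⁻ τ in Ioo a t, G τ * ENNReal.ofReal ((t - τ) ^ (-r)) := by
  have hk : Measurable fun s : ℝ => ENNReal.ofReal ((t - s) ^ (-(1 + r))) := by fun_prop
  calc _ = ∫⁻ s in Ioo a t, ∫⁻ τ in Ioo s t, G τ * ENNReal.ofReal ((t - s) ^ (-(1 + r))) := by
        simp_rw [lintegral_mul_const' _ _ ENNReal.ofReal_ne_top]
    _ = ∫⁻ τ in Ioo a t, G τ * ∫⁻ s in Ioo a τ, ENNReal.ofReal ((t - s) ^ (-(1 + r))) := by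
        rw [lintegral_Ioo_lintegral_Ioo_swap (by fun_prop)]
        simp_rw [lintegral_const_mul _ hk]
    _ ≤ ∫⁻ τ in Ioo a t, ENNReal.ofReal (1 / r) * (G τ * ENNReal.ofReal ((t - τ) ^ (-r))) := by
        refine setLIntegral_mono' measurableSet_Ioo fun τ hτ => ?_
        calc _ ≤ G τ * ∫⁻ s in Iio τ, ENNReal.ofReal ((t - s) ^ (-(1 + r))) := by
              gcongr; exact Ioo_subset_Iio_self
          _ = _ := by
              rw [setLIntegral_Iio_rpow_const_sub hr hτ.2, div_eq_inv_mul, ← one_div,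
                ENNReal.ofReal_mul (by positivity)]
              ring
    _ = _ := lintegral_const_mul' _ _ ENNReal.ofReal_ne_top

theorem lintegral_Ioo_convolution_tail_le {r : ℝ} (hr : 0 < r) (T : ℝ) {H F : ℝ → ℝ≥0∞}
    (hH : Measurable H) (hF : Measurable F) :
    ∫⁻ t in Ioo 0 T, ∫⁻ s in Ioo 0 t,
        (∫⁻ τ in Ioo s t, H τ * F (t - τ)) * ENNReal.ofReal ((t - s) ^ (-(1 + r)))
      ≤ ENNReal.ofReal (1 / r) * (∫⁻ τ in Ioo 0 T, H τ) *
          ∫⁻ u in Ioo 0 T, ENNReal.ofReal (u ^ (-r)) * F u := by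
  set Φ : ℝ → ℝ≥0∞ := fun u => ENNReal.ofReal (u ^ (-r)) * F u
  have hΦ : Measurable Φ := by fun_prop
  calc _ ≤ ∫⁻ t in Ioo 0 T, ENNReal.ofReal (1 / r) * ∫⁻ τ in Ioo 0 t, H τ * Φ (t - τ) := by
        refine setLIntegral_mono' measurableSet_Ioo fun t _ => ?_
        refine (setLIntegral_Ioo_mul_rpow_const_sub_le hr (G := fun τ => H τ * F (t - τ))
          (by fun_prop)).trans_eq ?_
        simp only [Φ, mul_assoc, mul_comm (F _)]
    _ = ENNReal.ofReal (1 / r) * ∫⁻ τ in Ioo 0 T, H τ * ∫⁻ t in Ioo τ T, Φ (t - τ) := by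
        rw [lintegral_const_mul' _ _ ENNReal.ofReal_ne_top,
          ← lintegral_Ioo_lintegral_Ioo_swap (by fun_prop)]
        congr 1
        exact lintegral_congr fun τ => lintegral_const_mul _ (by fun_prop)
    _ ≤ ENNReal.ofReal (1 / r) * ∫⁻ τ in Ioo 0 T, H τ * ∫⁻ u in Ioo 0 T, Φ u := by
        refine mul_le_mul_right (setLIntegral_mono' measurableSet_Ioo fun τ hτ =>
          mul_le_mul_right ?_ _) _
        calc ∫⁻ t in Ioo τ T, Φ (t - τ) = ∫⁻ u in Ioo 0 (T - τ), Φ u := by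
              simpa using setLIntegral_Ioo_comp_sub_const Φ 0 (T - τ) τ
          _ ≤ _ := lintegral_mono_set (Ioo_subset_Ioo_right (by linarith [hτ.1]))
    _ = _ := by rw [lintegral_mul_const _ hH, mul_assoc]

theorem setLIntegral_Ioo_mul_comp_const_sub_congr {T s t : ℝ} (hs : 0 ≤ s) (ht : t ≤ T)
    {H H' F F' : ℝ → ℝ≥0∞} (hH : H =ᵐ[volume.restrict (Ioo 0 T)] H')
    (hF : F =ᵐ[volume.restrict (Ioo 0 T)] F') :
    ∫⁻ τ in Ioo s t, H τ * F (t - τ) = ∫⁻ τ in Ioo s t, H' τ * F' (t - τ) := by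
  have hF_refl : ∀ᵐ τ, t - τ ∈ Ioo 0 T → F (t - τ) = F' (t - τ) :=
    (Measure.measurePreserving_sub_left volume t).quasiMeasurePreserving.ae
      ((ae_restrict_iff' measurableSet_Ioo).1 hF)
  refine lintegral_congr_ae ?_
  filter_upwards [ae_restrict_of_ae_restrict_of_subset (Ioo_subset_Ioo hs ht) hH,
    ae_restrict_of_ae hF_refl, ae_restrict_mem measurableSet_Ioo] with τ hHτ hFτ hτ
  rw [hHτ, hFτ ⟨by linarith [hτ.2], by linarith [hτ.1]⟩]

theorem lintegral_Ioo_convolution_tail_le_of_aemeasurable {r : ℝ} (hr : 0 < r) (T : ℝ)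
    {H F : ℝ → ℝ≥0∞} (hH : AEMeasurable H (volume.restrict (Ioo 0 T)))
    (hF : AEMeasurable F (volume.restrict (Ioo 0 T))) :
    ∫⁻ t in Ioo 0 T, ∫⁻ s in Ioo 0 t,
        (∫⁻ τ in Ioo s t, H τ * F (t - τ)) * ENNReal.ofReal ((t - s) ^ (-(1 + r)))
      ≤ ENNReal.ofReal (1 / r) * (∫⁻ τ in Ioo 0 T, H τ) *
          ∫⁻ u in Ioo 0 T, ENNReal.ofReal (u ^ (-r)) * F u := by
  calc _ = ∫⁻ t in Ioo 0 T, ∫⁻ s in Ioo 0 t,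
          (∫⁻ τ in Ioo s t, hH.mk H τ * hF.mk F (t - τ)) * ENNReal.ofReal ((t - s) ^ (-(1 + r))) :=
        setLIntegral_congr_fun measurableSet_Ioo fun t ht =>
          setLIntegral_congr_fun measurableSet_Ioo fun s hs => by
            rw [setLIntegral_Ioo_mul_comp_const_sub_congr hs.1.le ht.2.le hH.ae_eq_mk hF.ae_eq_mk]
    _ ≤ _ := lintegral_Ioo_convolution_tail_le hr T hH.measurable_mk hF.measurable_mk
    _ = _ := by
        rw [lintegral_congr_ae hH.ae_eq_mk.symm]
        congr 1
        exact lintegral_congr_ae (hF.ae_eq_mk.mono fun u hu => by simp only [hu])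

theorem convolution_Gagliardo_tail_estimate_general {V : Type*} [NormedAddCommGroup V]
    (β T : ℝ) (hβ0 : 0 < β)
    (h : ℝ → ℂ) (f : ℝ → V)
    (hh : IntegrableOn h (Ioo 0 T))
    (hfm : AEStronglyMeasurable f (volume.restrict (Ioo 0 T))) :
    ∫⁻ t in Ioo (0:ℝ) T, ∫⁻ s in Ioo (0:ℝ) t,
        (∫⁻ τ in Ioo s t, ENNReal.ofReal (‖h τ‖ * ‖f (t - τ)‖ ^ 2)) *
          ENNReal.ofReal ((t - s) ^ (-(1 + 2 * β)))
      ≤ ENNReal.ofReal (1 / (2 * β)) *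
          ENNReal.ofReal (∫ s in Ioo (0:ℝ) T, ‖h s‖) *
          ∫⁻ t in Ioo (0:ℝ) T, ENNReal.ofReal (t ^ (-(2 * β)) * ‖f t‖ ^ 2) := by
  have hF : AEMeasurable (fun u => ENNReal.ofReal (‖f u‖ ^ 2)) (volume.restrict (Ioo 0 T)) :=
    (hfm.norm.aemeasurable.pow_const 2).ennreal_ofReal
  simp_rw [ENNReal.ofReal_mul (norm_nonneg _), ofReal_norm,
    ofReal_integral_norm_eq_lintegral_enorm hh, ENNReal.ofReal_mul' (sq_nonneg _)]
  exact lintegral_Ioo_convolution_tail_le_of_aemeasurable (by positivity) T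
    hh.aemeasurable.enorm hF

/-- Key intermediate estimate in the proof that convolution by an `L¹`
kernel is bounded on `H^β(0,T;V)`, `0 < β < 1/2`:
`∫_0^T ∫_0^t (∫_s^t |h(τ)| ‖f(t-τ)‖² dτ) (t-s)^{-1-2β} ds dt
  ≤ (1/(2β)) ‖h‖_{L¹} ∫_0^T t^{-2β} ‖f(t)‖² dt`. -/
theorem convolution_Gagliardo_tail_estimate {V : Type*} [NormedAddCommGroup V]
    [InnerProductSpace ℂ V] [CompleteSpace V]
    (β T : ℝ) (hβ0 : 0 < β) (hβ : β < 1 / 2) (hT : 0 < T)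
    (h : ℝ → ℂ) (f : ℝ → V)
    (hh : IntegrableOn h (Ioo 0 T))
    (hfm : AEStronglyMeasurable f (volume.restrict (Ioo 0 T)))
    (hfw : ∫⁻ t in Ioo (0:ℝ) T, ENNReal.ofReal (t ^ (-(2 * β)) * ‖f t‖ ^ 2) < ⊤)
    (hfg : ∫⁻ t in Ioo (0:ℝ) T, ∫⁻ s in Ioo (0:ℝ) t,
        ENNReal.ofReal (‖f t - f s‖ ^ 2 / (t - s) ^ (1 + 2 * β)) < ⊤) :
    ∫⁻ t in Ioo (0:ℝ) T, ∫⁻ s in Ioo (0:ℝ) t,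
        (∫⁻ τ in Ioo s t, ENNReal.ofReal (‖h τ‖ * ‖f (t - τ)‖ ^ 2)) *
          ENNReal.ofReal ((t - s) ^ (-(1 + 2 * β)))
      ≤ ENNReal.ofReal (1 / (2 * β)) *
          ENNReal.ofReal (∫ s in Ioo (0:ℝ) T, ‖h s‖) *
          ∫⁻ t in Ioo (0:ℝ) T, ENNReal.ofReal (t ^ (-(2 * β)) * ‖f t‖ ^ 2) :=
  convolution_Gagliardo_tail_estimate_general β T hβ0 h f hh hfm
end

section
/- Let $V$ be a Hilbert space, $0 < \beta < \alpha < 1$, $\phi \in H^\beta(0,T;\mathbb{C})$ and $f \in C^\alpha([0,T]; V)$ ($\alpha$-Hölder continuous). Then the product $\phi f$ belongs to $H^\beta(0,T;V)$, and its Gagliardo seminorm satisfies $[\phi f]_{H^\beta(0,T;V)}^2 \le 2\Big(\frac{T^{2(\alpha-\beta)}}{2(\alpha-\beta)}[f]_{C^\alpha}^2 \|\phi\|_{L^2(0,T)}^2 + \|f\|_{L^\infty(0,T;V)}^2 [\phi]_{H^\beta(0,T)}^2\Big)$. -/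
/-!
Write `φ(t) f(t) - φ(s) f(s) = φ(t) (f(t) - f(s)) + (φ(t) - φ(s)) f(s)`. The second term is
controlled by `‖f‖_∞` times the Gagliardo integrand of `φ`. In the first, the Hölder bound turns
the singular kernel `(t - s)^(-1-2β)` into `(t - s)^(2(α-β)-1)`, which is integrable in `s`
because `β < α`, with integral at most `T^(2(α-β)) / (2(α-β))`; what remains is `‖φ‖²_{L²}`.
-/

open MeasureTheory Set
open scoped ENNReal

noncomputable def gagliardoSeminormSq {E : Type*} [SeminormedAddCommGroup E]
    (g : ℝ → E) (T β : ℝ) : ℝ≥0∞ :=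
  ∫⁻ t in Ioo 0 T, ∫⁻ s in Ioo 0 t, ENNReal.ofReal (‖g t - g s‖ ^ 2 / (t - s) ^ (1 + 2 * β))

theorem lintegral_Ioo_sub_rpow {t γ : ℝ} (ht : 0 ≤ t) (hγ : 0 < γ) :
    ∫⁻ s in Ioo 0 t, ENNReal.ofReal ((t - s) ^ (γ - 1)) = ENNReal.ofReal (t ^ γ / γ) := by
  have hint : IntervalIntegrable (fun s => (t - s) ^ (γ - 1)) volume 0 t := by
    simpa using (intervalIntegral.intervalIntegrable_rpow' (a := 0) (b := t)
      (by linarith : -1 < γ - 1)).comp_sub_left t |>.symm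
  rw [intervalIntegrable_iff_integrableOn_Ioc_of_le ht] at hint
  have hnonneg : 0 ≤ᵐ[volume.restrict (Ioc 0 t)] fun s => (t - s) ^ (γ - 1) :=
    (ae_restrict_iff' measurableSet_Ioc).2 (ae_of_all _ fun s hs => by
      have : 0 ≤ t - s := by linarith [hs.2]
      positivity)
  rw [setLIntegral_congr Ioo_ae_eq_Ioc, ← ofReal_integral_eq_lintegral_ofReal hint hnonneg,
    ← intervalIntegral.integral_of_le ht, intervalIntegral.integral_comp_sub_left
      (fun s => s ^ (γ - 1)), sub_self, sub_zero, integral_rpow (Or.inl (by linarith)),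
    sub_add_cancel, Real.zero_rpow hγ.ne', sub_zero]

section

variable {𝕜 E : Type*} [NormedField 𝕜] [SeminormedAddCommGroup E] [NormedSpace 𝕜 E]

theorem norm_smul_sub_smul_sq_le (a b : 𝕜) (x y : E) :
    ‖a • x - b • y‖ ^ 2 ≤ 2 * (‖a‖ ^ 2 * ‖x - y‖ ^ 2 + ‖a - b‖ ^ 2 * ‖y‖ ^ 2) := by
  have hsplit : a • x - b • y = a • (x - y) + (a - b) • y := by
    rw [smul_sub, sub_smul]; abel
  have hnorm : ‖a • x - b • y‖ ≤ ‖a‖ * ‖x - y‖ + ‖a - b‖ * ‖y‖ := by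
    rw [hsplit, ← norm_smul, ← norm_smul]
    exact norm_add_le _ _
  calc ‖a • x - b • y‖ ^ 2 ≤ (‖a‖ * ‖x - y‖ + ‖a - b‖ * ‖y‖) ^ 2 := by gcongr
    _ ≤ 2 * ((‖a‖ * ‖x - y‖) ^ 2 + (‖a - b‖ * ‖y‖) ^ 2) := add_sq_le
    _ = 2 * (‖a‖ ^ 2 * ‖x - y‖ ^ 2 + ‖a - b‖ ^ 2 * ‖y‖ ^ 2) := by ring

theorem ofReal_norm_smul_sub_smul_sq_div_rpow_le {a b : 𝕜} {x y : E} {d H M α p : ℝ}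
    (hd : 0 < d) (hxy : ‖x - y‖ ≤ H * d ^ α) (hy : ‖y‖ ≤ M) :
    ENNReal.ofReal (‖a • x - b • y‖ ^ 2 / d ^ p) ≤
      2 * (ENNReal.ofReal (H ^ 2 * ‖a‖ ^ 2) * ENNReal.ofReal (d ^ (2 * α - p)) +
        ENNReal.ofReal (M ^ 2) * ENNReal.ofReal (‖a - b‖ ^ 2 / d ^ p)) := by
  have hxy2 : ‖x - y‖ ^ 2 ≤ H ^ 2 * d ^ (2 * α) := by
    calc ‖x - y‖ ^ 2 ≤ (H * d ^ α) ^ 2 := by gcongr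
      _ = H ^ 2 * d ^ (2 * α) := by
        rw [mul_pow, ← Real.rpow_mul_natCast hd.le]; ring_nf
  have hreal : ‖a • x - b • y‖ ^ 2 / d ^ p ≤
      2 * (H ^ 2 * ‖a‖ ^ 2 * d ^ (2 * α - p) + M ^ 2 * (‖a - b‖ ^ 2 / d ^ p)) := by
    calc ‖a • x - b • y‖ ^ 2 / d ^ p
        ≤ 2 * (‖a‖ ^ 2 * (H ^ 2 * d ^ (2 * α)) + ‖a - b‖ ^ 2 * M ^ 2) / d ^ p := by
          gcongr
          exact (norm_smul_sub_smul_sq_le a b x y).trans (by gcongr)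
      _ = 2 * (H ^ 2 * ‖a‖ ^ 2 * d ^ (2 * α - p) + M ^ 2 * (‖a - b‖ ^ 2 / d ^ p)) := by
          rw [Real.rpow_sub hd]; field_simp
  refine (ENNReal.ofReal_le_ofReal hreal).trans_eq ?_
  rw [ENNReal.ofReal_mul zero_le_two, ENNReal.ofReal_ofNat,
    ENNReal.ofReal_add (by positivity) (by positivity),
    ENNReal.ofReal_mul (by positivity : 0 ≤ H ^ 2 * ‖a‖ ^ 2), ENNReal.ofReal_mul (sq_nonneg M)]

theorem lintegral_Ioo_smul_sub_smul_le {φ : ℝ → 𝕜} {f : ℝ → E} {T t α β H M : ℝ}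
    (hβα : β < α) (ht : 0 ≤ t) (htT : t ≤ T)
    (hH : ∀ s ∈ Ioo 0 t, ‖f t - f s‖ ≤ H * (t - s) ^ α) (hM : ∀ s ∈ Ioo 0 t, ‖f s‖ ≤ M) :
    ∫⁻ s in Ioo 0 t, ENNReal.ofReal (‖φ t • f t - φ s • f s‖ ^ 2 / (t - s) ^ (1 + 2 * β)) ≤
      2 * (ENNReal.ofReal (H ^ 2 * ‖φ t‖ ^ 2) *
          ENNReal.ofReal (T ^ (2 * (α - β)) / (2 * (α - β))) +
        ENNReal.ofReal (M ^ 2) *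
          ∫⁻ s in Ioo 0 t, ENNReal.ofReal (‖φ t - φ s‖ ^ 2 / (t - s) ^ (1 + 2 * β))) := by
  have hexp : 2 * α - (1 + 2 * β) = 2 * (α - β) - 1 := by ring
  calc _ ≤ ∫⁻ s in Ioo 0 t, 2 * (ENNReal.ofReal (H ^ 2 * ‖φ t‖ ^ 2) *
          ENNReal.ofReal ((t - s) ^ (2 * (α - β) - 1)) + ENNReal.ofReal (M ^ 2) *
            ENNReal.ofReal (‖φ t - φ s‖ ^ 2 / (t - s) ^ (1 + 2 * β))) :=
        setLIntegral_mono' measurableSet_Ioo fun s hs => by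
          rw [← hexp]
          exact ofReal_norm_smul_sub_smul_sq_div_rpow_le (sub_pos.2 hs.2) (hH s hs) (hM s hs)
    _ = 2 * (ENNReal.ofReal (H ^ 2 * ‖φ t‖ ^ 2) *
          (∫⁻ s in Ioo 0 t, ENNReal.ofReal ((t - s) ^ (2 * (α - β) - 1))) +
        ENNReal.ofReal (M ^ 2) *
          ∫⁻ s in Ioo 0 t, ENNReal.ofReal (‖φ t - φ s‖ ^ 2 / (t - s) ^ (1 + 2 * β))) := by
        rw [lintegral_const_mul' _ _ ENNReal.ofNat_ne_top, lintegral_add_left (by fun_prop),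
          lintegral_const_mul' _ _ ENNReal.ofReal_ne_top,
          lintegral_const_mul' _ _ ENNReal.ofReal_ne_top]
    _ ≤ _ := by
        rw [lintegral_Ioo_sub_rpow ht (by linarith)]
        gcongr

theorem gagliardoSeminormSq_smul_le {φ : ℝ → 𝕜} {f : ℝ → E} {T α β H M : ℝ} (hβα : β < α)
    (hφ : IntegrableOn (fun t => ‖φ t‖ ^ 2) (Ioo 0 T))
    (hH : ∀ s ∈ Icc 0 T, ∀ t ∈ Icc 0 T, ‖f t - f s‖ ≤ H * |t - s| ^ α)
    (hM : ∀ t ∈ Icc 0 T, ‖f t‖ ≤ M) :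
    gagliardoSeminormSq (fun t => φ t • f t) T β ≤
      2 * (ENNReal.ofReal (T ^ (2 * (α - β)) / (2 * (α - β)) * H ^ 2 *
          ∫ t in Ioo 0 T, ‖φ t‖ ^ 2) +
        ENNReal.ofReal (M ^ 2) * gagliardoSeminormSq φ T β) := by
  set C := T ^ (2 * (α - β)) / (2 * (α - β))
  have hinner : ∀ t ∈ Ioo 0 T,
      ∫⁻ s in Ioo 0 t, ENNReal.ofReal (‖φ t • f t - φ s • f s‖ ^ 2 / (t - s) ^ (1 + 2 * β)) ≤
        2 * (ENNReal.ofReal (H ^ 2 * ‖φ t‖ ^ 2) * ENNReal.ofReal C + ENNReal.ofReal (M ^ 2) *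
          ∫⁻ s in Ioo 0 t, ENNReal.ofReal (‖φ t - φ s‖ ^ 2 / (t - s) ^ (1 + 2 * β))) := by
    intro t ht
    have hs_mem : ∀ s ∈ Ioo 0 t, s ∈ Icc 0 T := fun s hs => ⟨hs.1.le, by linarith [hs.2, ht.2]⟩
    refine lintegral_Ioo_smul_sub_smul_le hβα ht.1.le ht.2.le (fun s hs => ?_)
      (fun s hs => hM s (hs_mem s hs))
    simpa [abs_of_pos (sub_pos.2 hs.2)] using hH s (hs_mem s hs) t ⟨ht.1.le, ht.2.le⟩
  have hL2 : ∫⁻ t in Ioo 0 T, ENNReal.ofReal (H ^ 2 * ‖φ t‖ ^ 2) =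
      ENNReal.ofReal (H ^ 2 * ∫ t in Ioo 0 T, ‖φ t‖ ^ 2) := by
    rw [← integral_const_mul]
    exact (ofReal_integral_eq_lintegral_ofReal (hφ.const_mul _)
      (ae_of_all _ fun t => by positivity)).symm
  have hL2_nonneg : 0 ≤ H ^ 2 * ∫ t in Ioo 0 T, ‖φ t‖ ^ 2 :=
    mul_nonneg (sq_nonneg H) (setIntegral_nonneg measurableSet_Ioo fun t _ => sq_nonneg _)
  calc gagliardoSeminormSq (fun t => φ t • f t) T β
      ≤ ∫⁻ t in Ioo 0 T, 2 * (ENNReal.ofReal (H ^ 2 * ‖φ t‖ ^ 2) * ENNReal.ofReal C +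
          ENNReal.ofReal (M ^ 2) *
            ∫⁻ s in Ioo 0 t, ENNReal.ofReal (‖φ t - φ s‖ ^ 2 / (t - s) ^ (1 + 2 * β))) :=
        setLIntegral_mono' measurableSet_Ioo hinner
    _ = 2 * ((∫⁻ t in Ioo 0 T, ENNReal.ofReal (H ^ 2 * ‖φ t‖ ^ 2)) * ENNReal.ofReal C +
          ENNReal.ofReal (M ^ 2) * gagliardoSeminormSq φ T β) := by
        rw [lintegral_const_mul' _ _ ENNReal.ofNat_ne_top,
          lintegral_add_left' (((hφ.aemeasurable.const_mul _).ennreal_ofReal).mul_const _),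
          lintegral_mul_const' _ _ ENNReal.ofReal_ne_top,
          lintegral_const_mul' _ _ ENNReal.ofReal_ne_top]
        rfl
    _ = _ := by
        rw [hL2, ← ENNReal.ofReal_mul hL2_nonneg]
        ring_nf

end

theorem product_Hoelder_Hbeta_general {V : Type*} [NormedAddCommGroup V]
    [InnerProductSpace ℂ V]
    (T α β : ℝ) (hβα : β < α)
    (φ : ℝ → ℂ) (f : ℝ → V) (Hf Mf : ℝ)
    (hφ2 : IntegrableOn (fun t => ‖φ t‖ ^ 2) (Ioo 0 T))
    (hφG : ∫⁻ t in Ioo (0:ℝ) T, ∫⁻ s in Ioo (0:ℝ) t,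
        ENNReal.ofReal (‖φ t - φ s‖ ^ 2 / (t - s) ^ (1 + 2 * β)) ≠ ⊤)
    (hHf : ∀ s ∈ Icc (0:ℝ) T, ∀ t ∈ Icc (0:ℝ) T, ‖f t - f s‖ ≤ Hf * |t - s| ^ α)
    (hMf : ∀ t ∈ Icc (0:ℝ) T, ‖f t‖ ≤ Mf) :
    (∫⁻ t in Ioo (0:ℝ) T, ∫⁻ s in Ioo (0:ℝ) t,
        ENNReal.ofReal (‖φ t • f t - φ s • f s‖ ^ 2 / (t - s) ^ (1 + 2 * β)) ≠ ⊤) ∧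
    ∫⁻ t in Ioo (0:ℝ) T, ∫⁻ s in Ioo (0:ℝ) t,
        ENNReal.ofReal (‖φ t • f t - φ s • f s‖ ^ 2 / (t - s) ^ (1 + 2 * β))
      ≤ 2 * (ENNReal.ofReal (T ^ (2 * (α - β)) / (2 * (α - β)) * Hf ^ 2 *
              ∫ t in Ioo (0:ℝ) T, ‖φ t‖ ^ 2) +
            ENNReal.ofReal (Mf ^ 2) *
              ∫⁻ t in Ioo (0:ℝ) T, ∫⁻ s in Ioo (0:ℝ) t,
                ENNReal.ofReal (‖φ t - φ s‖ ^ 2 / (t - s) ^ (1 + 2 * β))) := by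
  have h := gagliardoSeminormSq_smul_le (β := β) hβα hφ2 hHf hMf
  refine ⟨ne_top_of_le_ne_top ?_ h, h⟩
  exact ENNReal.mul_ne_top ENNReal.ofNat_ne_top
    (ENNReal.add_ne_top.2 ⟨ENNReal.ofReal_ne_top, ENNReal.mul_ne_top ENNReal.ofReal_ne_top hφG⟩)

/-- **Lemma 7.3.** If `0 < β < α < 1`, `φ ∈ H^β(0,T;ℂ)` and
`f ∈ C^α([0,T];V)`, then the product `φ f` belongs to `H^β(0,T;V)` with
`[φf]²_{H^β} ≤ 2 ( T^{2(α-β)}/(2(α-β)) [f]²_{C^α} ‖φ‖²_{L²} + ‖f‖²_∞ [φ]²_{H^β} )`. -/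
theorem product_Hoelder_Hbeta {V : Type*} [NormedAddCommGroup V]
    [InnerProductSpace ℂ V] [CompleteSpace V]
    (T α β : ℝ) (hT : 0 < T) (hβ0 : 0 < β) (hβα : β < α) (hα : α < 1)
    (φ : ℝ → ℂ) (f : ℝ → V) (Hf Mf : ℝ)
    (hφ2 : IntegrableOn (fun t => ‖φ t‖ ^ 2) (Ioo 0 T))
    (hφG : ∫⁻ t in Ioo (0:ℝ) T, ∫⁻ s in Ioo (0:ℝ) t,
        ENNReal.ofReal (‖φ t - φ s‖ ^ 2 / (t - s) ^ (1 + 2 * β)) ≠ ⊤)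
    (hHf : ∀ s ∈ Icc (0:ℝ) T, ∀ t ∈ Icc (0:ℝ) T, ‖f t - f s‖ ≤ Hf * |t - s| ^ α)
    (hMf : ∀ t ∈ Icc (0:ℝ) T, ‖f t‖ ≤ Mf) :
    (∫⁻ t in Ioo (0:ℝ) T, ∫⁻ s in Ioo (0:ℝ) t,
        ENNReal.ofReal (‖φ t • f t - φ s • f s‖ ^ 2 / (t - s) ^ (1 + 2 * β)) ≠ ⊤) ∧
    ∫⁻ t in Ioo (0:ℝ) T, ∫⁻ s in Ioo (0:ℝ) t,
        ENNReal.ofReal (‖φ t • f t - φ s • f s‖ ^ 2 / (t - s) ^ (1 + 2 * β))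
      ≤ 2 * (ENNReal.ofReal (T ^ (2 * (α - β)) / (2 * (α - β)) * Hf ^ 2 *
              ∫ t in Ioo (0:ℝ) T, ‖φ t‖ ^ 2) +
            ENNReal.ofReal (Mf ^ 2) *
              ∫⁻ t in Ioo (0:ℝ) T, ∫⁻ s in Ioo (0:ℝ) t,
                ENNReal.ofReal (‖φ t - φ s‖ ^ 2 / (t - s) ^ (1 + 2 * β))) :=
  product_Hoelder_Hbeta_general T α β hβα φ f Hf Mf hφ2 hφG hHf hMf
end

section
/- Let $V$ be a Hilbert space, $\beta \in (1/2, 1)$ and $f \in H^\beta(0,T;V)$ (i.e., $f$ continuous on $[0,T]$ with finite Gagliardo seminorm of order $\beta$). Then there exists a constant $C > 0$, depending only on $\beta$ (in particular independent of $T$ and $f$), such that $\|f\|_{L^2(0,T;V)}^2 \le C\,T\,\Big(\|f(0)\|_V^2 + T^{2\beta-1}\int_0^T \int_0^t \frac{\|f(t)-f(s)\|_V^2}{(t-s)^{1+2\beta}}\,ds\,dt\Big)$. -/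
/-!
Put `φ u = ‖f u - f 0‖`. Every point of the dyadic block `(a/4, a/2)` lies below every point of
`(a/2, a)`, so the means of `φ` over the two blocks differ by at most the mean of `‖f u - f v‖` over
pairs `v < u`, which Cauchy–Schwarz bounds by `a ^ (β - 1/2) √D`, where `D` is the one-sided
Gagliardo integral. Along `a = t / 2ⁿ` these bounds form a geometric series (this is where
`β > 1/2` enters), and the block means tend to `φ 0 = 0` by continuity, so
`‖f t - f 0‖ ≲ t⁻¹ ∫₀ᵗ ‖f t - f s‖ ds + t ^ (β - 1/2) √D`. Squaring, bounding the first term by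
Cauchy–Schwarz against the inner integral at `t`, and integrating over `(0, T)` gives the estimate,
with constants that come only from the halving `a ↦ a / 2`.
-/

open MeasureTheory Set Filter Topology
open scoped ENNReal

theorem ENNReal.add_sq_le (a b : ℝ≥0∞) : (a + b) ^ 2 ≤ 2 * (a ^ 2 + b ^ 2) := by
  rcases eq_top_or_lt_top a with rfl | ha
  · simp
  rcases eq_top_or_lt_top b with rfl | hb
  · simp
  lift a to NNReal using ha.ne
  lift b to NNReal using hb.ne
  exact_mod_cast _root_.add_sq_le (a := a) (b := b)

theorem ENNReal.le_tsum_of_le_add_of_tendsto_zero {b c : ℕ → ℝ≥0∞}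
    (hbc : ∀ n, b n ≤ b (n + 1) + c n) (hb : Tendsto b atTop (𝓝 0)) : b 0 ≤ ∑' n, c n := by
  have telescope : ∀ N, b 0 ≤ b N + ∑ n ∈ Finset.range N, c n := by
    intro N
    induction N with
    | zero => simp
    | succ N ih =>
      calc b 0 ≤ b N + ∑ n ∈ Finset.range N, c n := ih
        _ ≤ b (N + 1) + c N + ∑ n ∈ Finset.range N, c n := by gcongr; exact hbc N
        _ = b (N + 1) + ∑ n ∈ Finset.range (N + 1), c n := by
          rw [Finset.sum_range_succ]; ring
  have hlim : Tendsto (fun N => b N + ∑' n, c n) atTop (𝓝 (∑' n, c n)) := by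
    simpa using hb.add_const (∑' n, c n)
  exact ge_of_tendsto' hlim fun N => (telescope N).trans (by gcongr; exact ENNReal.sum_le_tsum _)

namespace MeasureTheory

variable {α : Type*} [MeasurableSpace α] {μ : Measure α}

theorem sq_lintegral_le_measure_univ_mul (g : α → ℝ≥0∞) :
    (∫⁻ x, g x ∂μ) ^ 2 ≤ μ univ * ∫⁻ x, g x ^ 2 ∂μ := by
  -- no measurability is needed: Hölder is applied to a measurable minorant with the same integral
  obtain ⟨g', hg'm, hg'g, hg'eq⟩ := exists_measurable_le_lintegral_eq μ g
  have holder := ENNReal.lintegral_mul_le_Lp_mul_Lq μ Real.HolderConjugate.two_two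
    hg'm.aemeasurable (aemeasurable_const (b := (1 : ℝ≥0∞)))
  simp only [Pi.mul_apply, mul_one, one_div, lintegral_const, ENNReal.rpow_two, one_pow,
    one_mul] at holder
  calc (∫⁻ x, g x ∂μ) ^ 2 ≤ ((∫⁻ x, g' x ^ 2 ∂μ) ^ (2⁻¹ : ℝ) * μ univ ^ (2⁻¹ : ℝ)) ^ 2 := by
        rw [hg'eq]; gcongr
    _ = μ univ * ∫⁻ x, g' x ^ 2 ∂μ := by
        rw [mul_pow, ← ENNReal.rpow_natCast, ← ENNReal.rpow_natCast (μ univ ^ _),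
          ← ENNReal.rpow_mul, ← ENNReal.rpow_mul]
        norm_num [mul_comm]
    _ ≤ μ univ * ∫⁻ x, g x ^ 2 ∂μ := by
        gcongr with x; exact hg'g x

theorem laverage_add_left {g : α → ℝ≥0∞} (hg : AEMeasurable g μ) (h : α → ℝ≥0∞) :
    ⨍⁻ x, (g x + h x) ∂μ = ⨍⁻ x, g x ∂μ + ⨍⁻ x, h x ∂μ := by
  simp only [laverage_eq, lintegral_add_left' hg, ENNReal.add_div]

theorem laverage_const_mul {c : ℝ≥0∞} (hc : c ≠ ∞) (g : α → ℝ≥0∞) :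
    ⨍⁻ x, c * g x ∂μ = c * ⨍⁻ x, g x ∂μ := by
  simp only [laverage_eq, lintegral_const_mul' c g hc, mul_div_assoc]

theorem sq_laverage_le [IsFiniteMeasure μ] (g : α → ℝ≥0∞) :
    (⨍⁻ x, g x ∂μ) ^ 2 ≤ ⨍⁻ x, g x ^ 2 ∂μ := by
  rcases eq_or_ne μ 0 with rfl | hμ
  · simp
  have hne : μ univ ≠ 0 := by simpa using hμ
  have htop : μ univ ≠ ∞ := measure_ne_top μ univ
  rw [laverage_eq, laverage_eq, div_eq_mul_inv, div_eq_mul_inv, mul_pow]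
  calc (∫⁻ x, g x ∂μ) ^ 2 * (μ univ)⁻¹ ^ 2
        ≤ μ univ * (∫⁻ x, g x ^ 2 ∂μ) * (μ univ)⁻¹ ^ 2 := by
        gcongr; exact sq_lintegral_le_measure_univ_mul g
    _ = (∫⁻ x, g x ^ 2 ∂μ) * (μ univ)⁻¹ := by
        rw [sq, mul_comm (μ univ), mul_assoc, ← mul_assoc (μ univ), ENNReal.mul_inv_cancel hne htop,
          one_mul]

end MeasureTheory

theorem hasSum_rpow_div_two_pow {t γ : ℝ} (ht : 0 ≤ t) (hγ : 0 < γ) :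
    HasSum (fun n : ℕ => (t / 2 ^ n) ^ γ) (t ^ γ / (1 - (2 ^ γ)⁻¹)) := by
  have hr : ((2 : ℝ) ^ γ)⁻¹ < 1 := inv_lt_one_of_one_lt₀ (Real.one_lt_rpow one_lt_two hγ)
  have hterm : (fun n : ℕ => (t / 2 ^ n) ^ γ) = fun n => t ^ γ * ((2 ^ γ)⁻¹) ^ n := by
    ext n
    rw [Real.div_rpow ht (by positivity), ← Real.rpow_natCast, ← Real.rpow_mul zero_le_two,
      mul_comm, Real.rpow_mul zero_le_two, Real.rpow_natCast, inv_pow, div_eq_mul_inv]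
  rw [hterm, div_eq_mul_inv]
  exact (hasSum_geometric_of_lt_one (by positivity) hr).mul_left (t ^ γ)

theorem tendsto_div_two_pow_nhdsGT_zero {t : ℝ} (ht : 0 < t) :
    Tendsto (fun n : ℕ => t / 2 ^ n) atTop (𝓝[>] 0) :=
  tendsto_nhdsWithin_iff.2
    ⟨tendsto_const_nhds.div_atTop (tendsto_pow_atTop_atTop_of_one_lt one_lt_two),
      Eventually.of_forall fun n => show 0 < t / 2 ^ n by positivity⟩

theorem volume_Ioo_half (a : ℝ) : volume (Ioo (a / 2) a) = ENNReal.ofReal (a / 2) := by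
  rw [Real.volume_Ioo]; ring_nf

section Seminorm

variable {V : Type*} [NormedAddCommGroup V]

noncomputable def gagliardoSlice (β : ℝ) (f : ℝ → V) (t : ℝ) : ℝ≥0∞ :=
  ∫⁻ s in Ioo 0 t, ENNReal.ofReal (‖f t - f s‖ ^ 2 / (t - s) ^ (1 + 2 * β))

/-- Only the triangle `0 < s < t < T` is integrated over: half of the symmetric Gagliardo
double integral. -/
noncomputable def gagliardo (β : ℝ) (f : ℝ → V) (T : ℝ) : ℝ≥0∞ :=
  ∫⁻ t in Ioo 0 T, gagliardoSlice β f t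

noncomputable def dyadicMean (f : ℝ → V) (a : ℝ) : ℝ≥0∞ :=
  ⨍⁻ u in Ioo (a / 2) a, ENNReal.ofReal ‖f u - f 0‖ ∂volume

theorem sq_lintegral_norm_sub_le {β : ℝ} (hβ : -(1 / 2) ≤ β) (f : ℝ → V) {u : ℝ} (hu : 0 ≤ u) :
    (∫⁻ v in Ioo 0 u, ENNReal.ofReal ‖f u - f v‖) ^ 2 ≤
      ENNReal.ofReal (u ^ (2 + 2 * β)) * gagliardoSlice β f u := by
  have hkernel : ∀ v ∈ Ioo 0 u, ENNReal.ofReal ‖f u - f v‖ ^ 2 ≤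
      ENNReal.ofReal (u ^ (1 + 2 * β)) *
        ENNReal.ofReal (‖f u - f v‖ ^ 2 / (u - v) ^ (1 + 2 * β)) := by
    intro v hv
    have huv : 0 < u - v := sub_pos.2 hv.2
    rw [← ENNReal.ofReal_pow (norm_nonneg _), ← ENNReal.ofReal_mul (by positivity)]
    refine ENNReal.ofReal_le_ofReal ?_
    calc ‖f u - f v‖ ^ 2
        = (u - v) ^ (1 + 2 * β) * (‖f u - f v‖ ^ 2 / (u - v) ^ (1 + 2 * β)) := by
          rw [mul_div_cancel₀ _ (by positivity)]
      _ ≤ u ^ (1 + 2 * β) * (‖f u - f v‖ ^ 2 / (u - v) ^ (1 + 2 * β)) := by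
          gcongr
          · linarith
          · linarith [hv.1]
  calc (∫⁻ v in Ioo 0 u, ENNReal.ofReal ‖f u - f v‖) ^ 2
      ≤ volume (Ioo 0 u) * ∫⁻ v in Ioo 0 u, ENNReal.ofReal ‖f u - f v‖ ^ 2 := by
        simpa using sq_lintegral_le_measure_univ_mul (μ := volume.restrict (Ioo 0 u)) _
    _ ≤ ENNReal.ofReal u * ∫⁻ v in Ioo 0 u, ENNReal.ofReal (u ^ (1 + 2 * β)) *
          ENNReal.ofReal (‖f u - f v‖ ^ 2 / (u - v) ^ (1 + 2 * β)) := by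
        rw [Real.volume_Ioo, sub_zero]
        gcongr 1
        exact setLIntegral_mono' measurableSet_Ioo hkernel
    _ = ENNReal.ofReal (u ^ (2 + 2 * β)) * gagliardoSlice β f u := by
        rw [lintegral_const_mul' _ _ ENNReal.ofReal_ne_top, ← mul_assoc,
          ← ENNReal.ofReal_mul hu, ← Real.rpow_one_add' hu (by linarith),
          show 1 + (1 + 2 * β) = 2 + 2 * β by ring]
        rfl

theorem tendsto_dyadicMean_nhdsGT_zero {f : ℝ → V} (hf : ContinuousWithinAt f (Ici 0) 0) :
    Tendsto (dyadicMean f) (𝓝[>] 0) (𝓝 0) := by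
  have hnorm : Tendsto (fun u => ENNReal.ofReal ‖f u - f 0‖) (𝓝[≥] 0) (𝓝 0) := by
    simpa using ENNReal.tendsto_ofReal (hf.sub (continuousWithinAt_const (b := f 0))).norm
  refine ENNReal.tendsto_nhds_zero.2 fun ε hε => ?_
  obtain ⟨δ, hδ, hsmall⟩ :=
    mem_nhdsGE_iff_exists_Ico_subset.1 (ENNReal.tendsto_nhds_zero.1 hnorm ε hε)
  filter_upwards [Ioo_mem_nhdsGT hδ] with a ha
  calc dyadicMean f a ≤ ⨍⁻ _ in Ioo (a / 2) a, ε ∂volume :=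
        laverage_mono_ae <| ae_restrict_of_forall_mem measurableSet_Ioo fun u hu =>
          hsmall ⟨by linarith [hu.1, ha.1], hu.2.trans ha.2⟩
    _ = ε := setLAverage_const (by simp [ha.1]) (by simp) ε

variable {f : ℝ → V} {T : ℝ}

theorem ofReal_norm_sub_le_dyadicMean_add (hf : ContinuousOn f (Icc 0 T)) {a u : ℝ} (ha : 0 < a)
    (haT : a ≤ T) (hau : a ≤ u) :
    ENNReal.ofReal ‖f u - f 0‖ ≤
      dyadicMean f a + ENNReal.ofReal (2 / a) * ∫⁻ v in Ioo 0 u, ENNReal.ofReal ‖f u - f v‖ := by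
  have hmeas : AEMeasurable (fun v => ENNReal.ofReal ‖f v - f 0‖)
      (volume.restrict (Ioo (a / 2) a)) := by
    have hcont : ContinuousOn (fun v => ‖f v - f 0‖) (Ioo (a / 2) a) :=
      ((hf.mono fun v hv => ⟨by linarith [hv.1], hv.2.le.trans haT⟩).sub continuousOn_const).norm
    exact (hcont.aemeasurable measurableSet_Ioo).ennreal_ofReal
  calc ENNReal.ofReal ‖f u - f 0‖
      = ⨍⁻ _ in Ioo (a / 2) a, ENNReal.ofReal ‖f u - f 0‖ ∂volume :=
        (setLAverage_const (by simp [ha]) (by simp) _).symm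
    _ ≤ ⨍⁻ v in Ioo (a / 2) a,
          (ENNReal.ofReal ‖f v - f 0‖ + ENNReal.ofReal ‖f u - f v‖) ∂volume := by
        refine laverage_mono_ae (Eventually.of_forall fun v => ?_)
        show ENNReal.ofReal ‖f u - f 0‖ ≤ ENNReal.ofReal ‖f v - f 0‖ + ENNReal.ofReal ‖f u - f v‖
        rw [← ENNReal.ofReal_add (norm_nonneg _) (norm_nonneg _), add_comm]
        exact ENNReal.ofReal_le_ofReal (norm_sub_le_norm_sub_add_norm_sub _ _ _)
    _ = dyadicMean f a + ⨍⁻ v in Ioo (a / 2) a, ENNReal.ofReal ‖f u - f v‖ ∂volume :=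
        laverage_add_left hmeas _
    _ ≤ dyadicMean f a + ENNReal.ofReal (2 / a) * ∫⁻ v in Ioo 0 u, ENNReal.ofReal ‖f u - f v‖ := by
        rw [setLAverage_eq, volume_Ioo_half, div_eq_mul_inv, mul_comm,
          ← ENNReal.ofReal_inv_of_pos (by positivity), inv_div]
        gcongr 2
        exact lintegral_mono_set fun v hv => ⟨by linarith [hv.1], hv.2.trans_le hau⟩

theorem dyadicMean_le_dyadicMean_half_add (hf : ContinuousOn f (Icc 0 T)) {a : ℝ} (ha : 0 < a)
    (haT : a ≤ T) :
    dyadicMean f a ≤ dyadicMean f (a / 2) + ENNReal.ofReal (4 / a) *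
      ⨍⁻ u in Ioo (a / 2) a, (∫⁻ v in Ioo 0 u, ENNReal.ofReal ‖f u - f v‖) ∂volume := by
  calc dyadicMean f a
      ≤ ⨍⁻ u in Ioo (a / 2) a, (dyadicMean f (a / 2) +
          ENNReal.ofReal (4 / a) * ∫⁻ v in Ioo 0 u, ENNReal.ofReal ‖f u - f v‖) ∂volume := by
        refine laverage_mono_ae (ae_restrict_of_forall_mem measurableSet_Ioo fun u hu => ?_)
        have h := ofReal_norm_sub_le_dyadicMean_add hf (half_pos ha) (by linarith) hu.1.le
        rwa [div_div_eq_mul_div, show (2 : ℝ) * 2 = 4 by norm_num] at h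
    _ = _ := by
        rw [laverage_add_left aemeasurable_const,
          setLAverage_const (by simp [ha]) (by simp),
          laverage_const_mul ENNReal.ofReal_ne_top]

theorem sq_setLAverage_lintegral_norm_sub_le {β : ℝ} (hβ : -(1 / 2) ≤ β) {a : ℝ} (ha : 0 < a)
    (haT : a ≤ T) :
    (⨍⁻ u in Ioo (a / 2) a, (∫⁻ v in Ioo 0 u, ENNReal.ofReal ‖f u - f v‖) ∂volume) ^ 2 ≤
      ENNReal.ofReal (2 * a ^ (1 + 2 * β)) * gagliardo β f T := by
  calc (⨍⁻ u in Ioo (a / 2) a, (∫⁻ v in Ioo 0 u, ENNReal.ofReal ‖f u - f v‖) ∂volume) ^ 2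
      ≤ ⨍⁻ u in Ioo (a / 2) a, (∫⁻ v in Ioo 0 u, ENNReal.ofReal ‖f u - f v‖) ^ 2 ∂volume :=
        sq_laverage_le _
    _ ≤ ⨍⁻ u in Ioo (a / 2) a, ENNReal.ofReal (a ^ (2 + 2 * β)) * gagliardoSlice β f u ∂volume := by
        refine laverage_mono_ae (ae_restrict_of_forall_mem measurableSet_Ioo fun u hu => ?_)
        dsimp only
        refine (sq_lintegral_norm_sub_le hβ f (by linarith [hu.1])).trans ?_
        gcongr ENNReal.ofReal ?_ * _
        exact Real.rpow_le_rpow (by linarith [hu.1]) hu.2.le (by linarith)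
    _ = ENNReal.ofReal (a ^ (2 + 2 * β)) *
          (ENNReal.ofReal (2 / a) * ∫⁻ u in Ioo (a / 2) a, gagliardoSlice β f u) := by
        rw [laverage_const_mul ENNReal.ofReal_ne_top, setLAverage_eq, volume_Ioo_half,
          div_eq_mul_inv, mul_comm (∫⁻ _ in _, _), ← ENNReal.ofReal_inv_of_pos (by positivity),
          inv_div]
    _ ≤ ENNReal.ofReal (a ^ (2 + 2 * β)) * (ENNReal.ofReal (2 / a) * gagliardo β f T) := by
        gcongr
        exact lintegral_mono_set (Ioo_subset_Ioo (by positivity) haT)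
    _ = ENNReal.ofReal (2 * a ^ (1 + 2 * β)) * gagliardo β f T := by
        rw [← mul_assoc, ← ENNReal.ofReal_mul (by positivity),
          show 2 + 2 * β = 1 + 2 * β + 1 by ring, Real.rpow_add_one ha.ne']
        congr 2
        field_simp

theorem dyadicMean_le_dyadicMean_half_add_rpow {β : ℝ} (hβ : -(1 / 2) ≤ β)
    (hf : ContinuousOn f (Icc 0 T)) (hD : gagliardo β f T ≠ ∞) {a : ℝ} (ha : 0 < a)
    (haT : a ≤ T) :
    dyadicMean f a ≤ dyadicMean f (a / 2) +
      ENNReal.ofReal (4 * √2 * √(gagliardo β f T).toReal * a ^ (β - 1 / 2)) := by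
  refine (dyadicMean_le_dyadicMean_half_add hf ha haT).trans ?_
  gcongr dyadicMean f (a / 2) + ?_
  rw [← ENNReal.pow_le_pow_left_iff two_ne_zero, mul_pow, ← ENNReal.ofReal_pow (by positivity),
    ← ENNReal.ofReal_pow (by positivity)]
  calc ENNReal.ofReal ((4 / a) ^ 2) *
        (⨍⁻ u in Ioo (a / 2) a, (∫⁻ v in Ioo 0 u, ENNReal.ofReal ‖f u - f v‖) ∂volume) ^ 2
      ≤ ENNReal.ofReal ((4 / a) ^ 2) *
          (ENNReal.ofReal (2 * a ^ (1 + 2 * β)) * ENNReal.ofReal (gagliardo β f T).toReal) := by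
        rw [ENNReal.ofReal_toReal hD]
        gcongr
        exact sq_setLAverage_lintegral_norm_sub_le hβ ha haT
    _ = _ := by
        rw [← ENNReal.ofReal_mul (by positivity), ← ENNReal.ofReal_mul (by positivity)]
        congr 1
        have hpow : a ^ (1 + 2 * β) = (a ^ (β - 1 / 2)) ^ 2 * a ^ 2 := by
          rw [← Real.rpow_natCast, ← Real.rpow_mul ha.le, ← Real.rpow_natCast a 2,
            ← Real.rpow_add ha]
          norm_num
          ring_nf
        rw [hpow, mul_pow, mul_pow, mul_pow, Real.sq_sqrt zero_le_two,
          Real.sq_sqrt ENNReal.toReal_nonneg]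
        field_simp

/-- `4 √2 ∑ₙ (2 ^ (β - 1/2))⁻¹ ^ n`: the per-block constant summed over the halvings. -/
noncomputable def dyadicConst (β : ℝ) : ℝ := 4 * √2 / (1 - (2 ^ (β - 1 / 2))⁻¹)

theorem dyadicConst_pos {β : ℝ} (hβ : 1 / 2 < β) : 0 < dyadicConst β := by
  have hr : ((2 : ℝ) ^ (β - 1 / 2))⁻¹ < 1 :=
    inv_lt_one_of_one_lt₀ (Real.one_lt_rpow one_lt_two (by linarith))
  exact div_pos (by positivity) (by linarith)

theorem ofReal_norm_sub_le_lintegral_add_rpow {β : ℝ} (hβ : 1 / 2 < β)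
    (hf : ContinuousOn f (Icc 0 T)) (hD : gagliardo β f T ≠ ∞) {t : ℝ} (ht : 0 < t) (htT : t ≤ T) :
    ENNReal.ofReal ‖f t - f 0‖ ≤
      ENNReal.ofReal (2 / t) * (∫⁻ s in Ioo 0 t, ENNReal.ofReal ‖f t - f s‖) +
        ENNReal.ofReal (dyadicConst β * √(gagliardo β f T).toReal * t ^ (β - 1 / 2)) := by
  have hstep : ∀ n : ℕ, dyadicMean f (t / 2 ^ n) ≤ dyadicMean f (t / 2 ^ (n + 1)) +
      ENNReal.ofReal (4 * √2 * √(gagliardo β f T).toReal * (t / 2 ^ n) ^ (β - 1 / 2)) := by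
    intro n
    have h := dyadicMean_le_dyadicMean_half_add_rpow (by linarith) hf hD
      (by positivity : 0 < t / 2 ^ n) ((div_le_self ht.le (one_le_pow₀ one_le_two)).trans htT)
    rwa [div_div, ← pow_succ] at h
  have hcont : ContinuousWithinAt f (Ici 0) 0 :=
    (hf 0 ⟨le_rfl, ht.le.trans htT⟩).mono_of_mem_nhdsWithin (Icc_mem_nhdsGE (ht.trans_le htT))
  have hlim : Tendsto (fun n : ℕ => dyadicMean f (t / 2 ^ n)) atTop (𝓝 0) :=
    (tendsto_dyadicMean_nhdsGT_zero hcont).comp (tendsto_div_two_pow_nhdsGT_zero ht)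
  have hsum : HasSum (fun n : ℕ => 4 * √2 * √(gagliardo β f T).toReal * (t / 2 ^ n) ^ (β - 1 / 2))
      (dyadicConst β * √(gagliardo β f T).toReal * t ^ (β - 1 / 2)) := by
    rw [show dyadicConst β * √(gagliardo β f T).toReal * t ^ (β - 1 / 2) =
        4 * √2 * √(gagliardo β f T).toReal * (t ^ (β - 1 / 2) / (1 - (2 ^ (β - 1 / 2))⁻¹)) by
      rw [dyadicConst]; ring]
    exact (hasSum_rpow_div_two_pow ht.le (by linarith)).mul_left _
  calc ENNReal.ofReal ‖f t - f 0‖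
      ≤ dyadicMean f t + ENNReal.ofReal (2 / t) * ∫⁻ s in Ioo 0 t, ENNReal.ofReal ‖f t - f s‖ :=
        ofReal_norm_sub_le_dyadicMean_add hf ht htT le_rfl
    _ ≤ ∑' n : ℕ, ENNReal.ofReal
          (4 * √2 * √(gagliardo β f T).toReal * (t / 2 ^ n) ^ (β - 1 / 2)) +
        ENNReal.ofReal (2 / t) * ∫⁻ s in Ioo 0 t, ENNReal.ofReal ‖f t - f s‖ := by
        gcongr
        simpa using ENNReal.le_tsum_of_le_add_of_tendsto_zero hstep hlim
    _ = _ := by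
        rw [← ENNReal.ofReal_tsum_of_nonneg (fun n => by positivity) hsum.summable, hsum.tsum_eq,
          add_comm]

theorem ofReal_sq_norm_le_add_gagliardoSlice {β : ℝ} (hβ : 1 / 2 < β)
    (hf : ContinuousOn f (Icc 0 T)) (hD : gagliardo β f T ≠ ∞) {t : ℝ} (ht : 0 < t) (htT : t ≤ T) :
    ENNReal.ofReal (‖f t‖ ^ 2) ≤
      ENNReal.ofReal (2 * ‖f 0‖ ^ 2 +
          4 * (dyadicConst β ^ 2 * (gagliardo β f T).toReal * T ^ (2 * β - 1))) +
        ENNReal.ofReal (16 * T ^ (2 * β)) * gagliardoSlice β f t := by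
  have hK := (dyadicConst_pos hβ).le
  have hT : 0 < T := ht.trans_le htT
  set x := ENNReal.ofReal ‖f 0‖
  set y := ENNReal.ofReal (2 / t) * ∫⁻ s in Ioo 0 t, ENNReal.ofReal ‖f t - f s‖
  set z := ENNReal.ofReal (dyadicConst β * √(gagliardo β f T).toReal * t ^ (β - 1 / 2))
  have hnorm : ENNReal.ofReal ‖f t‖ ≤ x + (y + z) :=
    calc ENNReal.ofReal ‖f t‖ ≤ ENNReal.ofReal (‖f 0‖ + ‖f t - f 0‖) :=
          ENNReal.ofReal_le_ofReal (norm_le_norm_add_norm_sub' _ _)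
      _ ≤ x + (y + z) := by
          rw [ENNReal.ofReal_add (norm_nonneg _) (norm_nonneg _)]
          gcongr
          exact ofReal_norm_sub_le_lintegral_add_rpow hβ hf hD ht htT
  have hy : y ^ 2 ≤ ENNReal.ofReal (4 * T ^ (2 * β)) * gagliardoSlice β f t :=
    calc y ^ 2 = ENNReal.ofReal ((2 / t) ^ 2) *
          (∫⁻ s in Ioo 0 t, ENNReal.ofReal ‖f t - f s‖) ^ 2 := by
          rw [mul_pow, ENNReal.ofReal_pow (by positivity)]
      _ ≤ ENNReal.ofReal ((2 / t) ^ 2) *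
          (ENNReal.ofReal (t ^ (2 + 2 * β)) * gagliardoSlice β f t) := by
          gcongr
          exact sq_lintegral_norm_sub_le (by linarith) f ht.le
      _ = ENNReal.ofReal (4 * t ^ (2 * β)) * gagliardoSlice β f t := by
          rw [← mul_assoc, ← ENNReal.ofReal_mul (by positivity), add_comm (2 : ℝ),
            Real.rpow_add ht, Real.rpow_two]
          congr 2
          field_simp
          ring
      _ ≤ ENNReal.ofReal (4 * T ^ (2 * β)) * gagliardoSlice β f t := by
          gcongr ENNReal.ofReal (4 * ?_) * _
          exact Real.rpow_le_rpow ht.le htT (by linarith)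
  have hz : z ^ 2 ≤
      ENNReal.ofReal (dyadicConst β ^ 2 * (gagliardo β f T).toReal * T ^ (2 * β - 1)) := by
    rw [← ENNReal.ofReal_pow (by positivity)]
    refine ENNReal.ofReal_le_ofReal ?_
    rw [mul_pow, mul_pow, Real.sq_sqrt ENNReal.toReal_nonneg, ← Real.rpow_mul_natCast ht.le,
      show (β - 1 / 2) * ((2 : ℕ) : ℝ) = 2 * β - 1 by push_cast; ring]
    gcongr
    linarith
  calc ENNReal.ofReal (‖f t‖ ^ 2) = ENNReal.ofReal ‖f t‖ ^ 2 := ENNReal.ofReal_pow (norm_nonneg _) 2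
    _ ≤ (x + (y + z)) ^ 2 := by gcongr
    _ ≤ 2 * (x ^ 2 + 2 * (y ^ 2 + z ^ 2)) :=
        (ENNReal.add_sq_le _ _).trans (by gcongr; exact ENNReal.add_sq_le _ _)
    _ ≤ 2 * (x ^ 2 + 2 * (ENNReal.ofReal (4 * T ^ (2 * β)) * gagliardoSlice β f t +
          ENNReal.ofReal (dyadicConst β ^ 2 * (gagliardo β f T).toReal * T ^ (2 * β - 1)))) := by
        gcongr
    _ = _ := by
        rw [← ENNReal.ofReal_pow (norm_nonneg _),
          ENNReal.ofReal_add (by positivity) (by positivity), ENNReal.ofReal_mul zero_le_two, ENNReal.ofReal_mul zero_le_four,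
          ENNReal.ofReal_mul zero_le_four, ENNReal.ofReal_mul (by norm_num : (0 : ℝ) ≤ 16)]
        simp only [ENNReal.ofReal_ofNat]
        ring

theorem lintegral_sq_norm_le {β : ℝ} (hβ : 1 / 2 < β) (hT : 0 < T)
    (hf : ContinuousOn f (Icc 0 T)) (hD : gagliardo β f T ≠ ∞) :
    ∫⁻ t in Ioo 0 T, ENNReal.ofReal (‖f t‖ ^ 2) ≤
      ENNReal.ofReal ((2 * ‖f 0‖ ^ 2 +
          4 * (dyadicConst β ^ 2 * (gagliardo β f T).toReal * T ^ (2 * β - 1))) * T +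
        16 * T ^ (2 * β) * (gagliardo β f T).toReal) := by
  set D := (gagliardo β f T).toReal
  set P := 2 * ‖f 0‖ ^ 2 + 4 * (dyadicConst β ^ 2 * D * T ^ (2 * β - 1))
  calc ∫⁻ t in Ioo 0 T, ENNReal.ofReal (‖f t‖ ^ 2)
      ≤ ∫⁻ t in Ioo 0 T, (ENNReal.ofReal P +
          ENNReal.ofReal (16 * T ^ (2 * β)) * gagliardoSlice β f t) :=
        setLIntegral_mono' measurableSet_Ioo fun t ht =>
          ofReal_sq_norm_le_add_gagliardoSlice hβ hf hD ht.1 ht.2.le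
    _ = ENNReal.ofReal P * ENNReal.ofReal T +
          ENNReal.ofReal (16 * T ^ (2 * β)) * ENNReal.ofReal D := by
        rw [lintegral_add_left measurable_const, setLIntegral_const, Real.volume_Ioo, sub_zero,
          lintegral_const_mul' _ _ ENNReal.ofReal_ne_top, ENNReal.ofReal_toReal hD]
        rfl
    _ = ENNReal.ofReal (P * T + 16 * T ^ (2 * β) * D) := by
        rw [← ENNReal.ofReal_mul (by positivity), ← ENNReal.ofReal_mul (by positivity),
          ← ENNReal.ofReal_add (by positivity) (by positivity)]

end Seminorm

theorem L2_bound_by_value_at_zero_and_seminorm_general {V : Type*} [NormedAddCommGroup V]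
    (β : ℝ) (hβ0 : 1 / 2 < β) :
    ∃ C > 0, ∀ T > (0:ℝ), ∀ f : ℝ → V, ContinuousOn f (Icc 0 T) →
      (∫⁻ t in Ioo (0:ℝ) T, ∫⁻ s in Ioo (0:ℝ) t,
          ENNReal.ofReal (‖f t - f s‖ ^ 2 / (t - s) ^ (1 + 2 * β)) ≠ ⊤) →
      ∫⁻ t in Ioo (0:ℝ) T, ENNReal.ofReal (‖f t‖ ^ 2)
        ≤ ENNReal.ofReal (C * T) *
          (ENNReal.ofReal (‖f 0‖ ^ 2) +
            ENNReal.ofReal (T ^ (2 * β - 1)) *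
              ∫⁻ t in Ioo (0:ℝ) T, ∫⁻ s in Ioo (0:ℝ) t,
                ENNReal.ofReal (‖f t - f s‖ ^ 2 / (t - s) ^ (1 + 2 * β))) := by
  refine ⟨4 * dyadicConst β ^ 2 + 16, by positivity, fun T hT f hf hD => ?_⟩
  change gagliardo β f T ≠ ∞ at hD
  change _ ≤ _ * (_ + _ * gagliardo β f T)
  refine (lintegral_sq_norm_le hβ0 hT hf hD).trans ?_
  conv_rhs => rw [← ENNReal.ofReal_toReal hD, ← ENNReal.ofReal_mul (by positivity),
    ← ENNReal.ofReal_add (by positivity) (by positivity), ← ENNReal.ofReal_mul (by positivity)]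
  refine ENNReal.ofReal_le_ofReal ?_
  have hpow : T ^ (2 * β) = T * T ^ (2 * β - 1) := by
    rw [Real.rpow_sub_one hT.ne']; field_simp
  have hslack : 0 ≤ (4 * dyadicConst β ^ 2 + 14) * T * ‖f 0‖ ^ 2 := by positivity
  rw [hpow]
  nlinarith [hslack, ENNReal.toReal_nonneg (a := gagliardo β f T)]

/-- **Lemma 3.7.** For `β ∈ (1/2,1)` there is `C > 0`, depending only on
`β`, such that for every `T > 0` and every `f ∈ H^β(0,T;V)` (continuous with finite
Gagliardo seminorm),
`‖f‖²_{L²(0,T;V)} ≤ C T (‖f(0)‖² + T^{2β-1} ∫_0^T ∫_0^t ‖f(t)-f(s)‖²/(t-s)^{1+2β} ds dt)`. -/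
theorem L2_bound_by_value_at_zero_and_seminorm {V : Type*} [NormedAddCommGroup V]
    [InnerProductSpace ℂ V] [CompleteSpace V]
    (β : ℝ) (hβ0 : 1 / 2 < β) (hβ1 : β < 1) :
    ∃ C > 0, ∀ T > (0:ℝ), ∀ f : ℝ → V, ContinuousOn f (Icc 0 T) →
      (∫⁻ t in Ioo (0:ℝ) T, ∫⁻ s in Ioo (0:ℝ) t,
          ENNReal.ofReal (‖f t - f s‖ ^ 2 / (t - s) ^ (1 + 2 * β)) ≠ ⊤) →
      ∫⁻ t in Ioo (0:ℝ) T, ENNReal.ofReal (‖f t‖ ^ 2)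
        ≤ ENNReal.ofReal (C * T) *
          (ENNReal.ofReal (‖f 0‖ ^ 2) +
            ENNReal.ofReal (T ^ (2 * β - 1)) *
              ∫⁻ t in Ioo (0:ℝ) T, ∫⁻ s in Ioo (0:ℝ) t,
                ENNReal.ofReal (‖f t - f s‖ ^ 2 / (t - s) ^ (1 + 2 * β))) :=
  L2_bound_by_value_at_zero_and_seminorm_general β hβ0
end

section
/- Let $V$ be a Hilbert space, $0 < T < T'$, $h \in L^1(0,T')$ and $z \in L^2(0,T';V)$. Write $h_0 := h|_{(0,T)}$, $h_1 := h|_{(T,T')}$, $z_0 := z|_{(0,T)}$, $z_1 := z|_{(T,T')}$, and let $\tilde h_0, \tilde z_0$ denote trivial extensions by zero to $(0,T')$. If $T' \le 2T$, then for almost every $t \in (0, T'-T)$: $(h * z)(T + t) = (\tilde h_0 * \tilde z_0)(T+t) + \big(h_1(\cdot + T) * z_0|_{(0, T'-T)}\big)(t) + \big(h_0|_{(0,T'-T)} * z_1(\cdot + T)\big)(t)$, where all convolutions are truncated convolutions $\int_0^t$. -/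
/-!
For `t ∈ (0, T' - T)` we have `t ≤ T`, so the integral of `s ↦ h (T + t - s) • z s` over
`(0, T + t)` splits at `t` and `T`. The product of the two extensions by zero vanishes outside
`(t, T)` and agrees with the integrand there, giving the first term; `(0, t)` gives the second
term, and `(T, T + t)`, shifted by `T`, the third. Splitting requires the integrand to be
integrable, which holds for almost every `t` because it is a convolution integrand of two
integrable functions (`z ∈ L² ⊆ L¹` on a bounded interval).
-/

open MeasureTheory Set

section TruncatedConvolution

variable {𝕜 E : Type*} [NontriviallyNormedField 𝕜] [NormedAddCommGroup E] [NormedSpace 𝕜 E]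

/-- On `(0, x)` the integrand agrees with the convolution integrand of the extensions by zero,
which is integrable for almost every `x`. -/
theorem ae_integrableOn_truncated_convolution {f : ℝ → 𝕜} {g : ℝ → E} {a : ℝ}
    (hf : IntegrableOn f (Ioo 0 a)) (hg : IntegrableOn g (Ioo 0 a)) :
    ∀ᵐ x, x ≤ a → IntegrableOn (fun s => f (x - s) • g s) (Ioo 0 x) := by
  have hF : Integrable ((Ioo 0 a).indicator f) :=
    (integrable_indicator_iff measurableSet_Ioo).mpr hf
  have hG : Integrable ((Ioo 0 a).indicator g) :=
    (integrable_indicator_iff measurableSet_Ioo).mpr hg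
  filter_upwards [hG.ae_convolution_exists (ContinuousLinearMap.lsmul 𝕜 𝕜).flip hF]
    with x hx hxa
  refine hx.integrableOn.congr_fun (fun s ⟨hs0, hsx⟩ => ?_) measurableSet_Ioo
  have hxs : x - s ∈ Ioo 0 a := ⟨sub_pos.mpr hsx, by linarith⟩
  have hs : s ∈ Ioo 0 a := ⟨hs0, hsx.trans_le hxa⟩
  simp [indicator_of_mem hxs, indicator_of_mem hs]

end TruncatedConvolution

section Splitting

variable {E : Type*} [NormedAddCommGroup E] [NormedSpace ℝ E]

theorem setIntegral_Ioo_eq_intervalIntegral {f : ℝ → E} {a b : ℝ} (hab : a ≤ b) :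
    ∫ s in Ioo a b, f s = ∫ s in a..b, f s := by
  rw [intervalIntegral.integral_of_le hab, integral_Ioc_eq_integral_Ioo]

theorem setIntegral_Ioo_add_eq_add_add {f : ℝ → E} {T t : ℝ} (ht : 0 ≤ t) (htT : t ≤ T)
    (hf : IntegrableOn f (Ioo 0 (T + t))) :
    ∫ s in Ioo 0 (T + t), f s =
      (∫ s in Ioo t T, f s) + (∫ s in Ioo 0 t, f s) + ∫ s in Ioo 0 t, f (s + T) := by
  have hf' : IntervalIntegrable f volume 0 (T + t) :=
    (intervalIntegrable_iff_integrableOn_Ioo_of_le (by linarith)).mpr hf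
  have hsub (c d : ℝ) (hc : 0 ≤ c) (hcd : c ≤ d) (hd : d ≤ T + t) :
      IntervalIntegrable f volume c d :=
    hf'.mono_set <| by
      rw [uIcc_of_le hcd, uIcc_of_le (by linarith)]
      exact Icc_subset_Icc hc hd
  rw [setIntegral_Ioo_eq_intervalIntegral (by linarith), setIntegral_Ioo_eq_intervalIntegral htT,
    setIntegral_Ioo_eq_intervalIntegral ht, setIntegral_Ioo_eq_intervalIntegral ht,
    intervalIntegral.integral_comp_add_right f T, zero_add, add_comm t T,
    ← intervalIntegral.integral_add_adjacent_intervals (hsub 0 T le_rfl (by linarith) (by linarith))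
      (hsub T (T + t) (by linarith) (by linarith) le_rfl),
    ← intervalIntegral.integral_add_adjacent_intervals (hsub 0 t le_rfl ht (by linarith))
      (hsub t T ht htT (by linarith))]
  abel

end Splitting

section ZeroExtension

variable {𝕜 E : Type*} [NormedAddCommGroup E] [NormedSpace ℝ E] [Zero 𝕜] [SMulWithZero 𝕜 E]

theorem setIntegral_ite_smul_ite (h : ℝ → 𝕜) (z : ℝ → E) {T t : ℝ} (ht : 0 ≤ t) :
    ∫ s in Ioo 0 (T + t), (if T + t - s < T then h (T + t - s) else 0) • (if s < T then z s else 0)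
      = ∫ s in Ioo t T, h (T + t - s) • z s := by
  have hind : (fun s => (if T + t - s < T then h (T + t - s) else 0) • (if s < T then z s else 0))
      = (Ioo t T).indicator (fun s => h (T + t - s) • z s) := by
    ext s
    by_cases hts : t < s <;> by_cases hsT : s < T <;>
      simp [indicator, hts, hsT, sub_lt_iff_lt_add, add_comm T]
  rw [hind, setIntegral_indicator measurableSet_Ioo,
    inter_eq_self_of_subset_right (Ioo_subset_Ioo ht (by linarith))]

end ZeroExtension

theorem convolution_splitting_three_terms_general {V : Type*} [NormedAddCommGroup V]
    [InnerProductSpace ℂ V]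
    (T T' : ℝ) (hT2 : T' ≤ 2 * T)
    (h : ℝ → ℂ) (z : ℝ → V)
    (hh : IntegrableOn h (Ioo 0 T'))
    (hzm : AEStronglyMeasurable z (volume.restrict (Ioo 0 T')))
    (hz2 : IntegrableOn (fun t => ‖z t‖ ^ 2) (Ioo 0 T')) :
    ∀ᵐ t ∂(volume.restrict (Ioo 0 (T' - T))),
      (∫ s in Ioo (0:ℝ) (T + t), h (T + t - s) • z s)
        = (∫ s in Ioo (0:ℝ) (T + t),
            (if T + t - s < T then h (T + t - s) else 0) •
              (if s < T then z s else 0)) +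
          (∫ s in Ioo (0:ℝ) t, h (t - s + T) • z s) +
          ∫ s in Ioo (0:ℝ) t, h (t - s) • z (s + T) := by
  have hz : IntegrableOn z (Ioo 0 T') :=
    ((memLp_two_iff_integrable_sq_norm hzm).mpr hz2).integrable one_le_two
  have hconv := (measurePreserving_add_left (volume : Measure ℝ) T).quasiMeasurePreserving.ae
    (ae_integrableOn_truncated_convolution hh hz)
  filter_upwards [ae_restrict_of_ae hconv, ae_restrict_mem (measurableSet_Ioo (a := (0 : ℝ)))]
    with t hint ⟨ht0, htT'⟩
  rw [setIntegral_Ioo_add_eq_add_add ht0.le (by linarith) (hint (by linarith)),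
    setIntegral_ite_smul_ite h z ht0.le]
  congr 2
  · exact setIntegral_congr_fun measurableSet_Ioo fun s _ => by ring_nf
  · ext s
    ring_nf

/-- **Lemma 4.3(III).** Decomposition of the truncated convolution past
time `T`, when `T < T' ≤ 2T`: for a.e. `t ∈ (0, T'-T)`,
`(h*z)(T+t) = (h̃₀ * z̃₀)(T+t) + (h₁(·+T) * z₀)(t) + (h₀ * z₁(·+T))(t)`. -/
theorem convolution_splitting_three_terms {V : Type*} [NormedAddCommGroup V]
    [InnerProductSpace ℂ V] [CompleteSpace V]
    (T T' : ℝ) (hT : 0 < T) (hTT' : T < T') (hT2 : T' ≤ 2 * T)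
    (h : ℝ → ℂ) (z : ℝ → V)
    (hh : IntegrableOn h (Ioo 0 T'))
    (hzm : AEStronglyMeasurable z (volume.restrict (Ioo 0 T')))
    (hz2 : IntegrableOn (fun t => ‖z t‖ ^ 2) (Ioo 0 T')) :
    ∀ᵐ t ∂(volume.restrict (Ioo 0 (T' - T))),
      (∫ s in Ioo (0:ℝ) (T + t), h (T + t - s) • z s)
        = (∫ s in Ioo (0:ℝ) (T + t),
            (if T + t - s < T then h (T + t - s) else 0) •
              (if s < T then z s else 0)) +
          (∫ s in Ioo (0:ℝ) t, h (t - s + T) • z s) +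
          ∫ s in Ioo (0:ℝ) t, h (t - s) • z (s + T) :=
  convolution_splitting_three_terms_general T T' hT2 h z hh hzm hz2
end
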